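/- arXiv:1406.1451 — 3 statements merged into one kernel-verified Lean document; each statement's English description precedes it below -/
import Mathlib

section
/- Let a, b, c, d ∈ ℂ with a d − b c ≠ 0, and suppose that (a t + b)/(c t + d) is real for every real t with c t + d ≠ 0. Then a·conj(c) ∈ ℝ, b·conj(d) ∈ ℝ, and b·conj(c) + a·conj(d) ∈ ℝ. -/
/-!
Multiplying `(a t + b)/(c t + d)` by the real number `|c t + d|²` shows that
`(a t + b)·conj(c t + d)` is real for every real `t` (trivially so where `c t + d = 0`).
Its imaginary part is the real quadratic `Im(a c̄) t² + Im(b c̄ + a d̄) t + Im(b d̄)`,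
which vanishes identically, so all three coefficients are zero.
-/

open Complex ComplexConjugate

namespace Complex

theorem im_mul_conj_eq_im_div_mul_normSq (z w : ℂ) :
    (z * conj w).im = (z / w).im * normSq w := by
  rcases eq_or_ne w 0 with rfl | hw
  · simp
  · rw [div_eq_mul_inv, inv_def, ← mul_assoc, im_mul_ofReal,
      inv_mul_cancel_right₀ (normSq_eq_zero.not.mpr hw)]

theorem im_linear_mul_conj_linear (a b c d : ℂ) (t : ℝ) :
    ((a * t + b) * conj (c * t + d)).im =
      (a * conj c).im * t ^ 2 + (b * conj c + a * conj d).im * t + (b * conj d).im := by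
  have expand : (a * t + b) * conj (c * t + d) =
      (a * conj c) * ((t ^ 2 : ℝ) : ℂ) + (b * conj c + a * conj d) * t + b * conj d := by
    rw [map_add, map_mul, conj_ofReal]
    push_cast
    ring
  rw [expand, add_im, add_im, im_mul_ofReal, im_mul_ofReal]

end Complex

theorem coeffs_eq_zero_of_forall_quadratic_eq_zero {K : Type*} [Field K] [CharZero K]
    {A B C : K} (h : ∀ t : K, A * t ^ 2 + B * t + C = 0) : A = 0 ∧ B = 0 ∧ C = 0 := by
  have h0 := h 0
  have h1 := h 1
  have h2 := h (-1)
  exact ⟨by linear_combination (h1 + h2) / 2 - h0, by linear_combination (h1 - h2) / 2,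
    by linear_combination h0⟩

theorem moebius_real_products_general (a b c d : ℂ)
    (h1 : ∀ t : ℝ, c * t + d ≠ 0 → ((a * t + b) / (c * t + d)).im = 0) :
    (a * (starRingEnd ℂ) c).im = 0 ∧ (b * (starRingEnd ℂ) d).im = 0 ∧
      (b * (starRingEnd ℂ) c + a * (starRingEnd ℂ) d).im = 0 := by
  have real_product (t : ℝ) : ((a * t + b) * conj (c * t + d)).im = 0 := by
    rcases eq_or_ne (c * t + d) 0 with hw | hw
    · simp [hw]
    · rw [im_mul_conj_eq_im_div_mul_normSq, h1 t hw, zero_mul]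
  obtain ⟨hA, hB, hC⟩ := coeffs_eq_zero_of_forall_quadratic_eq_zero fun t =>
    (im_linear_mul_conj_linear a b c d t).symm.trans (real_product t)
  exact ⟨hA, hC, hB⟩

/-- If a Möbius transformation `φ(t) = (a t + b)/(c t + d)` with complex coefficients and
`a d − b c ≠ 0` maps real numbers to real numbers wherever it is defined, then
`a·conj(c)`, `b·conj(d)` and `b·conj(c) + a·conj(d)` are real. -/
theorem moebius_real_products (a b c d : ℂ) (h : a * d - b * c ≠ 0)
    (h1 : ∀ t : ℝ, c * t + d ≠ 0 → ((a * t + b) / (c * t + d)).im = 0) :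
    (a * (starRingEnd ℂ) c).im = 0 ∧ (b * (starRingEnd ℂ) d).im = 0 ∧
      (b * (starRingEnd ℂ) c + a * (starRingEnd ℂ) d).im = 0 :=
  moebius_real_products_general a b c d h1
end

section
/- Let a, b, c, d ∈ ℝ with a d − b c ≠ 0, let F(t, s) = (c t + d)s − (a t + b) ∈ ℝ[t, s], and let K ∈ ℝ[t, s] be a bivariate polynomial such that K(t, (a t + b)/(c t + d)) = 0 for every real t with c t + d ≠ 0. Then F divides K in ℝ[t, s]. -/
/-!
View `K` as a polynomial `P` in `s` over `ℝ[t]` and put `p = c t + d`, `q = a t + b`. The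
homogenised value `p ^ deg P * P(q / p)` is a polynomial in `t` (`(P.scaleRoots p).eval q`)
vanishing wherever `p(t) ≠ 0`, hence identically; so `q / p` is a root of `P` over the fraction
field `ℝ(t)`, and `p s - q` divides `P` there. As `a d - b c ≠ 0` makes `p` and `q` coprime,
`p s - q` is primitive, and Gauss's lemma brings the divisibility down to `ℝ[t][s]`.
-/

namespace Polynomial

theorem eval₂_div_eq_zero_iff_eval_scaleRoots {R K : Type*} [CommSemiring R] [Field K]
    (f : R →+* K) (P : R[X]) {p q : R} (hp : f p ≠ 0) :
    eval₂ f (f q / f p) P = 0 ↔ f ((P.scaleRoots p).eval q) = 0 := by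
  rw [← eval₂_hom, ← mul_div_cancel₀ (f q) hp, scaleRoots_eval₂_mul,
    mul_div_cancel₀ _ hp]
  simp [hp]

theorem isPrimitive_C_mul_X_sub_C {R : Type*} [CommRing R] {p q : R} (hpq : IsCoprime p q) :
    (C p * X - C q).IsPrimitive := by
  intro r hr
  rw [C_dvd_iff_dvd_coeff] at hr
  exact hpq.isUnit_of_dvd' (by simpa using hr 1) (by simpa using hr 0)

theorem C_mul_X_sub_C_dvd_of_eval_scaleRoots_eq_zero {R : Type*} [CommRing R] [IsDomain R]
    [IsGCDMonoid R] {p q : R} (hpq : IsCoprime p q) (hp : p ≠ 0) {P : R[X]}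
    (hP : (P.scaleRoots p).eval q = 0) : C p * X - C q ∣ P := by
  let f := algebraMap R (FractionRing R)
  have hfp : f p ≠ 0 := (map_ne_zero_iff f (IsFractionRing.injective R _)).2 hp
  have hroot : (P.map f).IsRoot (f q / f p) := by
    rw [IsRoot, eval_map, eval₂_div_eq_zero_iff_eval_scaleRoots f P hfp, hP, map_zero]
  have hfactor : (C p * X - C q).map f = C (f p) * (X - C (f q / f p)) := by
    rw [Polynomial.map_sub, Polynomial.map_mul, map_C, map_C, map_X, mul_sub, ← C_mul,
      mul_div_cancel₀ _ hfp]
  refine (isPrimitive_C_mul_X_sub_C hpq).dvd_of_fraction_map_dvd_fraction_map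
    (K := FractionRing R) ?_
  rw [hfactor, (isUnit_C.2 hfp.isUnit).mul_left_dvd]
  exact dvd_iff_isRoot.2 hroot

theorem eq_zero_of_eval_eq_zero_of_eval_ne_zero {R : Type*} [CommRing R] [IsDomain R]
    [Infinite R] {p g : R[X]} (hp : p ≠ 0) (hg : ∀ t, p.eval t ≠ 0 → g.eval t = 0) :
    g = 0 := by
  have hpg : p * g = 0 := Polynomial.funext fun t => by
    by_cases ht : p.eval t = 0 <;> simp [ht, hg]
  exact (mul_eq_zero.1 hpg).resolve_left hp

section Linear

variable {k : Type*} [Field k] {a b c d : k}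

theorem C_mul_X_add_C_ne_zero_of_det_ne_zero (h : a * d - b * c ≠ 0) : C c * X + C d ≠ 0 := by
  intro hp
  have hc : c = 0 := by simpa using congr(coeff $hp 1)
  have hd : d = 0 := by simpa using congr(coeff $hp 0)
  exact h (by rw [hc, hd]; ring)

theorem isCoprime_C_mul_X_add_C_of_det_ne_zero (h : a * d - b * c ≠ 0) :
    IsCoprime (C c * X + C d) (C a * X + C b) := by
  refine ⟨C ((a * d - b * c)⁻¹ * a), C (-((a * d - b * c)⁻¹ * c)), ?_⟩
  calc _ = C ((a * d - b * c)⁻¹ * (a * d - b * c)) := by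
        simp only [map_mul, map_neg, map_sub]; ring
    _ = 1 := by rw [inv_mul_cancel₀ h, C_1]

end Linear

namespace Bivariate

theorem eval_equivMvPolynomial {R : Type*} [CommSemiring R] (P : R[X][Y]) (x y : R) :
    MvPolynomial.eval ![x, y] (equivMvPolynomial R P) = P.evalEval x y := by
  have hcomp : (MvPolynomial.aeval ![x, y]).comp (equivMvPolynomial R).toAlgHom =
      aevalAeval x y := by
    ext <;> simp
  rw [← coe_aevalAeval_eq_evalEval, ← hcomp, ← MvPolynomial.coe_aeval_eq_eval]
  rfl

end Bivariate

end Polynomial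

open MvPolynomial

/-- Let `a, b, c, d ∈ ℝ` with `a d − b c ≠ 0`, let `F(t, s) = (c t + d)s − (a t + b)`
(with `t = X 0`, `s = X 1`), and let `K ∈ ℝ[t, s]` vanish on the graph of the Möbius
transformation `φ(t) = (a t + b)/(c t + d)`, i.e. `K(t, φ(t)) = 0` for every real `t`
with `c t + d ≠ 0`. Then `F` divides `K` in `ℝ[t, s]`. -/
theorem moebiusLike_dvd_of_vanishing (a b c d : ℝ) (h : a * d - b * c ≠ 0)
    (K : MvPolynomial (Fin 2) ℝ)
    (hK : ∀ t : ℝ, c * t + d ≠ 0 →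
      eval ![t, (a * t + b) / (c * t + d)] K = 0) :
    ((C c * X 0 + C d) * X 1 - (C a * X 0 + C b) : MvPolynomial (Fin 2) ℝ) ∣ K := by
  open Polynomial Bivariate in
  obtain ⟨P, rfl⟩ := (equivMvPolynomial ℝ).surjective K
  set p : ℝ[X] := Polynomial.C c * Polynomial.X + Polynomial.C d
  set q : ℝ[X] := Polynomial.C a * Polynomial.X + Polynomial.C b
  have hp : p ≠ 0 := C_mul_X_add_C_ne_zero_of_det_ne_zero h
  have hvanish : (P.scaleRoots p).eval q = 0 := by
    refine eq_zero_of_eval_eq_zero_of_eval_ne_zero hp fun t ht => ?_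
    refine (eval₂_div_eq_zero_iff_eval_scaleRoots (evalRingHom t) P ht).1 ?_
    have hct : c * t + d ≠ 0 := by simpa [p] using ht
    simpa [p, q, eval₂_evalRingHom, eval_equivMvPolynomial] using hK t hct
  have hdvd := C_mul_X_sub_C_dvd_of_eval_scaleRoots_eq_zero
    (isCoprime_C_mul_X_add_C_of_det_ne_zero h) hp hvanish
  convert map_dvd (equivMvPolynomial ℝ) hdvd
  simp
end

section
/- Let x : ℝ → ℝ³, let Q ∈ ℝ^{3×3} be an orthogonal matrix, let b ∈ ℝ³, and let φ : ℝ → ℝ. Suppose x is three times differentiable at t and at φ(t), φ is three times differentiable at t with φ'(t) ≠ 0, and Q x(u) + b = x(φ(u)) for all u in some neighborhood of t. Then κ_x(φ(t)) = κ_x(t) and τ_x(φ(t)) = det(Q) · τ_x(t). -/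
open Matrix Filter Topology

/-- The Euclidean norm on `ℝ³ = Fin 3 → ℝ`. -/
noncomputable def eNorm (v : Fin 3 → ℝ) : ℝ := Real.sqrt (∑ i, v i ^ 2)

/-- The Euclidean inner product on `ℝ³ = Fin 3 → ℝ`. -/
def eInner (u v : Fin 3 → ℝ) : ℝ := ∑ i, u i * v i

/-- The curvature `κ_x(t) = ‖x'(t) × x''(t)‖ / ‖x'(t)‖³` of a parametric curve `x` at `t`
(with the Lean convention that division by zero yields zero). -/
noncomputable def curvature (x : ℝ → Fin 3 → ℝ) (t : ℝ) : ℝ :=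
  eNorm ((deriv x t) ⨯₃ (deriv (deriv x) t)) / eNorm (deriv x t) ^ 3

/-- The torsion `τ_x(t) = ⟪x'(t) × x''(t), x'''(t)⟫ / ‖x'(t) × x''(t)‖²` of a parametric
curve `x` at `t` (with the Lean convention that division by zero yields zero). -/
noncomputable def torsion (x : ℝ → Fin 3 → ℝ) (t : ℝ) : ℝ :=
  eInner ((deriv x t) ⨯₃ (deriv (deriv x) t)) (deriv (deriv (deriv x)) t) /
    eNorm ((deriv x t) ⨯₃ (deriv (deriv x) t)) ^ 2

/-- A map from `ℝ` to a normed space is three times differentiable at `t` if it is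
differentiable in a neighborhood of `t`, its derivative is differentiable in a
neighborhood of `t`, and its second derivative is differentiable at `t`. -/
def ThreeTimesDiffAt {E : Type*} [NormedAddCommGroup E] [NormedSpace ℝ E]
    (f : ℝ → E) (t : ℝ) : Prop :=
  (∀ᶠ u in 𝓝 t, DifferentiableAt ℝ f u) ∧
  (∀ᶠ u in 𝓝 t, DifferentiableAt ℝ (deriv f) u) ∧
  DifferentiableAt ℝ (deriv (deriv f)) t

/- Differentiating `Q x(u) + b = x(φ u)` three times gives, with `p = φ'(t)`,
`Q x'(t) = p x'(φ t)`, `Q x''(t) = φ''(t) x'(φ t) + p² x''(φ t)` and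
`Q x'''(t) ≡ p³ x'''(φ t)` modulo `x'(φ t), x''(φ t)`. An orthogonal `Q` preserves `⬝ᵥ` and
satisfies `Q (u × v) = det Q • (Q u × Q v)`, so passing from `φ t` to `t` multiplies `‖x' × x''‖`
by `|p|³`, `‖x'‖` by `|p|` and `⟪x' × x'', x'''⟫` by `det Q p⁶`. The powers of `p` cancel in
`κ` and `τ`, and `(det Q)² = 1`. -/

lemma transpose_mulVec_cross_mulVec {R : Type*} [CommRing R] (Q : Matrix (Fin 3) (Fin 3) R)
    (u v : Fin 3 → R) : Qᵀ *ᵥ ((Q *ᵥ u) ⨯₃ (Q *ᵥ v)) = Q.det • (u ⨯₃ v) := by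
  ext i
  fin_cases i <;> simp [cross_apply, mulVec, dotProduct, det_fin_three, Fin.sum_univ_three] <;> ring

section Orthogonal

variable {n R : Type*} [Fintype n] [CommRing R]

lemma det_mul_self_of_transpose_mul_self [DecidableEq n] {Q : Matrix n n R} (hQ : Qᵀ * Q = 1) :
    Q.det * Q.det = 1 := by
  simpa [det_transpose] using congrArg det hQ

lemma dotProduct_mulVec_mulVec_of_transpose_mul_self [DecidableEq n] {Q : Matrix n n R}
    (hQ : Qᵀ * Q = 1) (u v : n → R) : (Q *ᵥ u) ⬝ᵥ (Q *ᵥ v) = u ⬝ᵥ v := by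
  rw [dotProduct_mulVec, ← mulVec_transpose, mulVec_mulVec, hQ, one_mulVec]

lemma mulVec_cross_of_transpose_mul_self {Q : Matrix (Fin 3) (Fin 3) R} (hQ : Qᵀ * Q = 1)
    (u v : Fin 3 → R) : Q *ᵥ (u ⨯₃ v) = Q.det • ((Q *ᵥ u) ⨯₃ (Q *ᵥ v)) := by
  have h := congrArg (Q *ᵥ ·) (transpose_mulVec_cross_mulVec Q u v)
  simp only [mulVec_mulVec, mul_eq_one_comm.mp hQ, one_mulVec, mulVec_smul] at h
  rw [h, smul_smul, det_mul_self_of_transpose_mul_self hQ, one_smul]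

end Orthogonal

lemma eNorm_eq_sqrt_dotProduct (v : Fin 3 → ℝ) : eNorm v = √(v ⬝ᵥ v) := by
  simp only [eNorm, dotProduct, sq]

lemma eNorm_smul (c : ℝ) (v : Fin 3 → ℝ) : eNorm (c • v) = |c| * eNorm v := by
  rw [eNorm_eq_sqrt_dotProduct, eNorm_eq_sqrt_dotProduct, smul_dotProduct, dotProduct_smul,
    smul_eq_mul, smul_eq_mul, ← mul_assoc, Real.sqrt_mul (mul_self_nonneg c),
    Real.sqrt_mul_self_eq_abs]

lemma eNorm_mulVec_of_transpose_mul_self {Q : Matrix (Fin 3) (Fin 3) ℝ} (hQ : Qᵀ * Q = 1)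
    (v : Fin 3 → ℝ) : eNorm (Q *ᵥ v) = eNorm v := by
  rw [eNorm_eq_sqrt_dotProduct, eNorm_eq_sqrt_dotProduct,
    dotProduct_mulVec_mulVec_of_transpose_mul_self hQ]

section Jet

variable {Q : Matrix (Fin 3) (Fin 3) ℝ} {p q r s : ℝ} {a b c w₁ w₂ w₃ : Fin 3 → ℝ}

lemma mulVec_cross_of_jet (hQ : Qᵀ * Q = 1) (h₁ : Q *ᵥ w₁ = p • a)
    (h₂ : Q *ᵥ w₂ = q • a + p ^ 2 • b) :
    Q *ᵥ (w₁ ⨯₃ w₂) = (Q.det * p ^ 3) • (a ⨯₃ b) := by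
  rw [mulVec_cross_of_transpose_mul_self hQ, h₁, h₂]
  simp only [map_add, map_smul, LinearMap.smul_apply, cross_self]
  module

lemma eNorm_cross_of_jet (hQ : Qᵀ * Q = 1) (h₁ : Q *ᵥ w₁ = p • a)
    (h₂ : Q *ᵥ w₂ = q • a + p ^ 2 • b) :
    eNorm (w₁ ⨯₃ w₂) = |p| ^ 3 * eNorm (a ⨯₃ b) := by
  have hdet : |Q.det| = 1 := by
    rcases mul_self_eq_one_iff.mp (det_mul_self_of_transpose_mul_self hQ) with h | h <;> simp [h]
  rw [← eNorm_mulVec_of_transpose_mul_self hQ, mulVec_cross_of_jet hQ h₁ h₂, eNorm_smul, abs_mul,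
    hdet, one_mul, abs_pow]

lemma curvature_eq_of_jet (hQ : Qᵀ * Q = 1) (hp : p ≠ 0) (h₁ : Q *ᵥ w₁ = p • a)
    (h₂ : Q *ᵥ w₂ = q • a + p ^ 2 • b) :
    eNorm (a ⨯₃ b) / eNorm a ^ 3 = eNorm (w₁ ⨯₃ w₂) / eNorm w₁ ^ 3 := by
  rw [eNorm_cross_of_jet hQ h₁ h₂, ← eNorm_mulVec_of_transpose_mul_self hQ w₁, h₁, eNorm_smul,
    mul_pow, mul_div_mul_left _ _ (pow_ne_zero 3 (abs_ne_zero.mpr hp))]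

lemma torsion_eq_of_jet (hQ : Qᵀ * Q = 1) (hp : p ≠ 0) (h₁ : Q *ᵥ w₁ = p • a)
    (h₂ : Q *ᵥ w₂ = q • a + p ^ 2 • b) (h₃ : Q *ᵥ w₃ = r • a + s • b + p ^ 3 • c) :
    eInner (a ⨯₃ b) c / eNorm (a ⨯₃ b) ^ 2 =
      Q.det * (eInner (w₁ ⨯₃ w₂) w₃ / eNorm (w₁ ⨯₃ w₂) ^ 2) := by
  have hinner : eInner (w₁ ⨯₃ w₂) w₃ = Q.det * p ^ 6 * eInner (a ⨯₃ b) c := by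
    change _ ⬝ᵥ _ = _ * (_ ⬝ᵥ _)
    rw [← dotProduct_mulVec_mulVec_of_transpose_mul_self hQ, mulVec_cross_of_jet hQ h₁ h₂, h₃]
    simp only [dotProduct_add, dotProduct_smul, smul_dotProduct, dotProduct_comm _ a,
      dotProduct_comm _ b, dot_self_cross, dot_cross_self, smul_eq_mul]
    ring
  rw [hinner, eNorm_cross_of_jet hQ h₁ h₂, mul_pow, ← pow_mul, Even.pow_abs ⟨3, rfl⟩]
  field_simp
  rw [sq Q.det, det_mul_self_of_transpose_mul_self hQ]
  ring

end Jet

section Calculus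

variable {E F : Type*} [NormedAddCommGroup E] [NormedSpace ℝ E] [NormedAddCommGroup F]
  [NormedSpace ℝ F]

lemma HasDerivAt.smul_comp {α : ℝ → ℝ} {g : ℝ → E} {φ : ℝ → ℝ} {α' φ' : ℝ} {g' : E} {u : ℝ}
    (hα : HasDerivAt α α' u) (hg : HasDerivAt g g' (φ u)) (hφ : HasDerivAt φ φ' u) :
    HasDerivAt (fun v => α v • g (φ v)) (α' • g (φ u) + (α u * φ') • g') u := by
  rw [mul_smul, add_comm]
  exact hα.fun_smul (hg.scomp u hφ)

namespace ContinuousLinearMap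

variable (L : E →L[ℝ] F) {f : ℝ → E} {G : ℝ → F} {t : ℝ}

lemma map_deriv_eq_of_eventuallyEq {G' : F} (h : ∀ᶠ u in 𝓝 t, L (f u) = G u)
    (hf : DifferentiableAt ℝ f t) (hG : HasDerivAt G G' t) : L (deriv f t) = G' :=
  (L.hasFDerivAt.comp_hasDerivAt t hf.hasDerivAt).unique (hG.congr_of_eventuallyEq h)

lemma eventually_map_deriv_eq_of_eventuallyEq {G' : ℝ → F} (h : ∀ᶠ u in 𝓝 t, L (f u) = G u)
    (hf : ∀ᶠ u in 𝓝 t, DifferentiableAt ℝ f u) (hG : ∀ᶠ u in 𝓝 t, HasDerivAt G (G' u) u) :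
    ∀ᶠ u in 𝓝 t, L (deriv f u) = G' u := by
  filter_upwards [h.eventually_nhds, hf, hG] with u hu hfu hGu
  exact L.map_deriv_eq_of_eventuallyEq hu hfu hGu

lemma map_derivs_of_map_add_eq_comp {g : ℝ → F} {φ : ℝ → ℝ} {b : F}
    (hf : ThreeTimesDiffAt f t) (hg : ThreeTimesDiffAt g (φ t)) (hφ : ThreeTimesDiffAt φ t)
    (h : ∀ᶠ u in 𝓝 t, L (f u) + b = g (φ u)) :
    L (deriv f t) = deriv φ t • deriv g (φ t) ∧
    L (deriv (deriv f) t) =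
      deriv (deriv φ) t • deriv g (φ t) + deriv φ t ^ 2 • deriv (deriv g) (φ t) ∧
    L (deriv (deriv (deriv f)) t) = deriv (deriv (deriv φ)) t • deriv g (φ t) +
      (3 * deriv φ t * deriv (deriv φ) t) • deriv (deriv g) (φ t) +
      deriv φ t ^ 3 • deriv (deriv (deriv g)) (φ t) := by
  obtain ⟨hf₁, hf₂, hf₃⟩ := hf
  obtain ⟨hg₁, hg₂, hg₃⟩ := hg
  obtain ⟨hφ₁, hφ₂, hφ₃⟩ := hφ
  have hφc : Tendsto φ (𝓝 t) (𝓝 (φ t)) := hφ₁.self_of_nhds.continuousAt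
  have h₁ : ∀ᶠ u in 𝓝 t, L (deriv f u) = deriv φ u • deriv g (φ u) :=
    L.eventually_map_deriv_eq_of_eventuallyEq (h.mono fun u => eq_sub_of_add_eq) hf₁ <| by
      filter_upwards [hφ₁, hφc.eventually hg₁] with u hφu hgu
      exact (hgu.hasDerivAt.scomp u hφu.hasDerivAt).sub_const b
  have h₂ : ∀ᶠ u in 𝓝 t, L (deriv (deriv f) u) = deriv (deriv φ) u • deriv g (φ u) +
      (deriv φ u * deriv φ u) • deriv (deriv g) (φ u) :=
    L.eventually_map_deriv_eq_of_eventuallyEq h₁ hf₂ <| by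
      filter_upwards [hφ₂, hφ₁, hφc.eventually hg₂] with u hφ'u hφu hgu
      exact hφ'u.hasDerivAt.smul_comp hgu.hasDerivAt hφu.hasDerivAt
  have hφ' := hφ₂.self_of_nhds.hasDerivAt
  refine ⟨h₁.self_of_nhds, h₂.self_of_nhds.trans (by module), ?_⟩
  rw [L.map_deriv_eq_of_eventuallyEq h₂ hf₃ <|
    (hφ₃.hasDerivAt.smul_comp hg₂.self_of_nhds.hasDerivAt hφ₁.self_of_nhds.hasDerivAt).add
    ((hφ'.fun_mul hφ').smul_comp hg₃.hasDerivAt hφ₁.self_of_nhds.hasDerivAt)]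
  module

end ContinuousLinearMap

end Calculus

/-- Let `x : ℝ → ℝ³`, `Q` an orthogonal matrix, `b ∈ ℝ³`, and `φ : ℝ → ℝ`. If `x` is
three times differentiable at `t` and at `φ(t)`, `φ` is three times differentiable at `t`
with `φ'(t) ≠ 0`, and `Q x(u) + b = x(φ(u))` for all `u` in a neighborhood of `t`, then
`κ_x(φ(t)) = κ_x(t)` and `τ_x(φ(t)) = det(Q) · τ_x(t)`. -/
theorem curvature_torsion_of_symmetry (x : ℝ → Fin 3 → ℝ)
    (Q : Matrix (Fin 3) (Fin 3) ℝ) (hQ : Qᵀ * Q = 1) (b : Fin 3 → ℝ)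
    (φ : ℝ → ℝ) (t : ℝ)
    (hxt : ThreeTimesDiffAt x t) (hxφt : ThreeTimesDiffAt x (φ t))
    (hφ : ThreeTimesDiffAt φ t) (hφ' : deriv φ t ≠ 0)
    (heq : ∀ᶠ u in 𝓝 t, Q *ᵥ x u + b = x (φ u)) :
    curvature x (φ t) = curvature x t ∧ torsion x (φ t) = Q.det * torsion x t := by
  obtain ⟨h₁, h₂, h₃⟩ :=
    (LinearMap.toContinuousLinearMap (mulVecLin Q)).map_derivs_of_map_add_eq_comp hxt hxφt hφ heq
  exact ⟨curvature_eq_of_jet hQ hφ' h₁ h₂, torsion_eq_of_jet hQ hφ' h₁ h₂ h₃⟩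
end
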